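/- Truth values are the orthogonals of falsity values: for every closed negative formula N over Σ with parameters in M, the truth value ⟦N⟧ equals { f ∈ R_C(1, [|N|] ⅋ [E]) : for all a ∈ ⦃N⦄, μκ.[a]f ∈ ⫫ }, where f ⊥ a is defined by μκ.[a]f ∈ ⫫. -/

import Mathlib

open CategoryTheory CategoryTheory.Limits

universe v u

/-! ## Categories of continuations -/

/-- The data of an exponential `R^A` in a category `C` with binary products:
an object `obj` together with a bijection `(X ⨯ A ⟶ R) ≃ (X ⟶ obj)`, natural in `X`. -/
structure ExpObj {C : Type u} [Category.{v} C] [HasBinaryProducts C] (R A : C) where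
  obj : C
  curry : ∀ {X : C}, (X ⨯ A ⟶ R) → (X ⟶ obj)
  uncurry : ∀ {X : C}, (X ⟶ obj) → (X ⨯ A ⟶ R)
  curry_uncurry : ∀ {X : C} (f : X ⟶ obj), curry (uncurry f) = f
  uncurry_curry : ∀ {X : C} (f : X ⨯ A ⟶ R), uncurry (curry f) = f
  curry_natural : ∀ {X Y : C} (h : Y ⟶ X) (f : X ⨯ A ⟶ R),
      curry (prod.map h (𝟙 A) ≫ f) = h ≫ curry f

/-- The canonical distributivity morphism `(A×B) ⊕ (A×D) ⟶ A×(B⊕D)`. -/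
noncomputable def distCan {C : Type u} [Category.{v} C] [HasBinaryProducts C]
    [HasBinaryCoproducts C] (A B D : C) : (A ⨯ B) ⨿ (A ⨯ D) ⟶ A ⨯ (B ⨿ D) :=
  coprod.desc (prod.map (𝟙 A) coprod.inl) (prod.map (𝟙 A) coprod.inr)

/-- Types of λμ-calculus over a set of base types. -/
inductive LTy (Bt : Type) : Type
  | base : Bt → LTy Bt
  | arr : LTy Bt → LTy Bt → LTy Bt
  | prd : LTy Bt → LTy Bt → LTy Bt
  | bot : LTy Bt

section Cat

variable {C : Type u} [Category.{v} C] [HasFiniteProducts C] [HasFiniteCoproducts C]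
variable {R : C} (e : ∀ A : C, ExpObj R A)

/-- The object `R^A`. -/
def Robj (A : C) : C := (e A).obj

/-- The contravariant action `R^f : R^B ⟶ R^A` of `R^(-)` on `f : A ⟶ B`. -/
noncomputable def Rmap {A B : C} (f : A ⟶ B) : Robj e B ⟶ Robj e A :=
  (e A).curry (prod.map (𝟙 (Robj e B)) f ≫ (e B).uncurry (𝟙 (Robj e B)))

variable {Bt : Type} (κ : Bt → C)

/-- The object `K_σ` of continuations of type `σ`:
`K_{σ→τ} = R^{K_σ} × K_τ`, `K_{σ×τ} = K_σ ⊕ K_τ`, `K_⊥ = 1`. -/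
noncomputable def KObj : LTy Bt → C
  | .base b => κ b
  | .arr σ τ => Robj e (KObj σ) ⨯ KObj τ
  | .prd σ τ => KObj σ ⨿ KObj τ
  | .bot => ⊤_ C

variable (E : Bt)

/-- The space `R_C(1, [σ] ⅋ [E])` of potential realizers at type `σ`:
morphisms `1 ⟶ R^{K_σ × K_E}`. -/
noncomputable def RE (τ : LTy Bt) : Type v :=
  (⊤_ C) ⟶ Robj e (KObj e κ τ ⨯ κ E)

/-- The CPS-image `ǧ : K_E ⟶ R^{K_σ}` of a potential realizer `g : 1 ⟶ [σ] ⅋ [E]`. -/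
noncomputable def checkR {σ : LTy Bt} (g : RE e κ E σ) : κ E ⟶ Robj e (KObj e κ σ) :=
  (e (KObj e κ σ)).curry
    (prod.lift (terminal.from _) (prod.lift prod.snd prod.fst) ≫
      (e (KObj e κ σ ⨯ κ E)).uncurry g)

/-- Semantic application `f g : 1 ⟶ [τ] ⅋ [E]` of `f : 1 ⟶ [σ→τ] ⅋ [E]` to
`g : 1 ⟶ [σ] ⅋ [E]`. -/
noncomputable def apR {σ τ : LTy Bt} (f : RE e κ E (.arr σ τ)) (g : RE e κ E σ) :
    RE e κ E τ :=
  (e (KObj e κ τ ⨯ κ E)).curry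
    (prod.lift (terminal.from _)
        (prod.lift
          (prod.lift (prod.snd ≫ prod.snd ≫ checkR e κ E g) (prod.snd ≫ prod.fst))
          (prod.snd ≫ prod.snd)) ≫
      (e (KObj e κ (.arr σ τ) ⨯ κ E)).uncurry f)

/-- First semantic projection `π₁ f : 1 ⟶ [σ] ⅋ [E]`. -/
noncomputable def prR1 {σ τ : LTy Bt} (f : RE e κ E (.prd σ τ)) : RE e κ E σ :=
  f ≫ Rmap e (prod.map (coprod.inl : KObj e κ σ ⟶ KObj e κ σ ⨿ KObj e κ τ) (𝟙 (κ E)))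

/-- Second semantic projection `π₂ f : 1 ⟶ [τ] ⅋ [E]`. -/
noncomputable def prR2 {σ τ : LTy Bt} (f : RE e κ E (.prd σ τ)) : RE e κ E τ :=
  f ≫ Rmap e (prod.map (coprod.inr : KObj e κ τ ⟶ KObj e κ σ ⨿ KObj e κ τ) (𝟙 (κ E)))

/-- The binding `μκ.f : 1 ⟶ [E]` of the distinguished μ-variable `κ` in
`f : 1 ⟶ [⊥] ⅋ [E]`. -/
noncomputable def muR (f : RE e κ E .bot) : (⊤_ C) ⟶ Robj e (κ E) :=
  f ≫ Rmap e (prod.lift (terminal.from (κ E)) (𝟙 (κ E)))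

/-- The naming `[a]f : 1 ⟶ [⊥] ⅋ [E]` of `f : 1 ⟶ [σ] ⅋ [E]` by a counter-realizer
`a : K_E ⟶ K_σ`. -/
noncomputable def nameR {σ : LTy Bt} (a : κ E ⟶ KObj e κ σ) (f : RE e κ E σ) :
    RE e κ E .bot :=
  f ≫ Rmap e (prod.lift (prod.snd ≫ a) (prod.snd : KObj e κ .bot ⨯ κ E ⟶ κ E))

end Cat

/-! ## Multisorted first-order logic with negative and positive predicates -/

/-- Sorts: simple types over base sorts. -/
inductive FSort (B : Type) : Type
  | base : B → FSort B
  | arrow : FSort B → FSort B → FSort B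

/-- A multisorted first-order signature whose predicates are partitioned into negative
predicates (`NPred`) and positive predicates (`PPred`). -/
structure Sgn : Type 1 where
  Base : Type
  Cst : Type
  cstSort : Cst → FSort Base
  NPred : Type
  narity : NPred → List (FSort Base)
  PPred : Type
  parity : PPred → List (FSort Base)

/-- Type-valued membership: de Bruijn pointers into a context. -/
inductive Idx {α : Type} : α → List α → Type
  | here {a : α} {l : List α} : Idx a (a :: l)
  | there {a b : α} {l : List α} : Idx a l → Idx a (b :: l)

variable (S : Sgn)

/-- Individuals (first-order terms) of the logic. -/
inductive Trm : List (FSort S.Base) → FSort S.Base → Type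
  | var {ctx σ} : Idx σ ctx → Trm ctx σ
  | cst {ctx} (c : S.Cst) : Trm ctx (S.cstSort c)
  | app {ctx σ τ} : Trm ctx (.arrow σ τ) → Trm ctx σ → Trm ctx τ

/-- Lists of terms matching a list of sorts. -/
inductive TrmList (ctx : List (FSort S.Base)) : List (FSort S.Base) → Type
  | nil : TrmList ctx []
  | cons {σ l} : Trm S ctx σ → TrmList ctx l → TrmList ctx (σ :: l)

/-- Formulas of the logic, with separate negative and positive atoms. -/
inductive Fml : List (FSort S.Base) → Type
  | natom {ctx} (P : S.NPred) : TrmList S ctx (S.narity P) → Fml ctx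
  | patom {ctx} (P : S.PPred) : TrmList S ctx (S.parity P) → Fml ctx
  | bot {ctx} : Fml ctx
  | imp {ctx} : Fml ctx → Fml ctx → Fml ctx
  | conj {ctx} : Fml ctx → Fml ctx → Fml ctx
  | all {ctx} (σ : FSort S.Base) : Fml (σ :: ctx) → Fml ctx

variable {S}

/-- Negative formulas: negative atoms, `⊥`, `A ⇒ N`, `N ∧ N'`, `∀x N`. -/
inductive IsNeg : ∀ {ctx : List (FSort S.Base)}, Fml S ctx → Prop
  | natom {ctx} (P : S.NPred) (ts : TrmList S ctx (S.narity P)) : IsNeg (.natom P ts)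
  | bot {ctx} : IsNeg (ctx := ctx) .bot
  | imp {ctx} {A B : Fml S ctx} : IsNeg B → IsNeg (.imp A B)
  | conj {ctx} {A B : Fml S ctx} : IsNeg A → IsNeg B → IsNeg (.conj A B)
  | all {ctx σ} {A : Fml S (σ :: ctx)} : IsNeg A → IsNeg (.all σ A)

/-- Heterogeneous lists. -/
inductive HList {α : Type} (F : α → Type) : List α → Type
  | nil : HList F []
  | cons {a l} : F a → HList F l → HList F (a :: l)

/-- A `Σ`-structure: a set for each sort, an application function, an element for each
individual constant, and an interpretation of the predicates. -/
structure Struc (S : Sgn) : Type 1 where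
  U : FSort S.Base → Type
  ap : ∀ {σ τ}, U (.arrow σ τ) → U σ → U τ
  cst : ∀ c : S.Cst, U (S.cstSort c)
  npred : ∀ P : S.NPred, HList U (S.narity P) → Prop
  ppred : ∀ P : S.PPred, HList U (S.parity P) → Prop

variable {M : Struc S}

/-- Environments assigning elements of the structure to the free variables. -/
def Env (M : Struc S) (ctx : List (FSort S.Base)) : Type :=
  ∀ σ, Idx σ ctx → M.U σ

/-- Extension of an environment. -/
def Env.cons {ctx : List (FSort S.Base)} {σ : FSort S.Base} (a : M.U σ)
    (env : Env M ctx) : Env M (σ :: ctx)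
  | _, .here => a
  | _, .there i => env _ i

/-- The empty environment. -/
def Env.nil : Env M [] := fun _ i => by cases i

/-- Evaluation of individuals in a structure. -/
def Trm.eval {ctx : List (FSort S.Base)} (env : Env M ctx) :
    ∀ {σ}, Trm S ctx σ → M.U σ
  | _, .var i => env _ i
  | _, .cst c => M.cst c
  | _, .app t u => M.ap (t.eval env) (u.eval env)

/-- Evaluation of lists of individuals. -/
def TrmList.eval {ctx : List (FSort S.Base)} (env : Env M ctx) :
    ∀ {l}, TrmList S ctx l → HList M.U l
  | _, .nil => .nil
  | _, .cons t ts => .cons (t.eval env) (ts.eval env)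

/-! ## Truth values and falsity values -/

section Realizability

variable {C : Type u} [Category.{v} C] [HasFiniteProducts C] [HasFiniteCoproducts C]
variable {R : C} (e : ∀ A : C, ExpObj R A)
variable {Bt : Type} (κ : Bt → C) (E : Bt)
variable {S : Sgn} {M : Struc S} (pty : S.PPred → LTy Bt)

/-- The λμ-type `|A|` associated to a formula `A` (negative atoms and `⊥` are mapped to
the empty type `⊥`, positive atoms to their given types, and first-order quantification is
forgotten). -/
def tyOf : ∀ {ctx : List (FSort S.Base)}, Fml S ctx → LTy Bt
  | _, .natom _ _ => .bot
  | _, .patom P _ => pty P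
  | _, .bot => .bot
  | _, .imp A B => .arr (tyOf A) (tyOf B)
  | _, .conj A B => .prd (tyOf A) (tyOf B)
  | _, .all _ A => tyOf A

variable (TVp : ∀ P : S.PPred, HList M.U (S.parity P) → Set (RE e κ E (pty P)))
variable (Pole : Set ((⊤_ C) ⟶ Robj e (κ E)))

/-- The truth value `⟦A⟧ ⊆ R_C(1, [|A|] ⅋ [E])` of a formula with parameters in `M`. -/
noncomputable def tv : ∀ {ctx : List (FSort S.Base)} (A : Fml S ctx) (_ : Env M ctx),
    Set (RE e κ E (tyOf pty A))
  | _, .natom P ts, env => {f | M.npred P (ts.eval env) ∨ muR e κ E f ∈ Pole}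
  | _, .patom P ts, env => TVp P (ts.eval env)
  | _, .bot, _ => {f | muR e κ E f ∈ Pole}
  | _, .imp A B, env =>
      {f | ∀ g ∈ tv A env, apR e κ E f g ∈ tv B env}
  | _, .conj A B, env =>
      {f | prR1 e κ E f ∈ tv A env ∧ prR2 e κ E f ∈ tv B env}
  | _, .all σ A, env => {f | ∀ a : M.U σ, f ∈ tv A (Env.cons a env)}

/-- The falsity value `⦃A⦄ ⊆ C(K_E, K_{|A|})` of a (negative) formula with parameters
in `M`. -/
noncomputable def fv : ∀ {ctx : List (FSort S.Base)} (A : Fml S ctx) (_ : Env M ctx),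
    Set (κ E ⟶ KObj e κ (tyOf pty A))
  | _, .natom P ts, env =>
      {a | ¬ M.npred P (ts.eval env) ∧ a = terminal.from (κ E)}
  | _, .patom _ _, _ => ∅
  | _, .bot, _ => {a | a = terminal.from (κ E)}
  | _, .imp A B, env =>
      {x | ∃ g ∈ tv e κ E pty TVp Pole A env, ∃ a ∈ fv B env,
        x = prod.lift (checkR e κ E g) a}
  | _, .conj A B, env =>
      {x | (∃ a ∈ fv A env, x = a ≫ coprod.inl) ∨ (∃ b ∈ fv B env, x = b ≫ coprod.inr)}
  | _, .all σ A, env => {x | ∃ a : M.U σ, x ∈ fv A (Env.cons a env)}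

end Realizability

/-! ## Auxiliary lemmas -/

section AuxLemmas

attribute [reducible] Robj RE KObj tyOf

variable {C : Type u} [Category.{v} C] [HasFiniteProducts C] [HasFiniteCoproducts C]
variable {R : C} (e : ∀ A : C, ExpObj R A)

lemma uncurry_eq {A X : C} (h : X ⟶ Robj e A) :
    (e A).uncurry h = prod.map h (𝟙 A) ≫ (e A).uncurry (𝟙 (Robj e A)) := by
  have h1 : (e A).curry (prod.map h (𝟙 A) ≫ (e A).uncurry (𝟙 (Robj e A))) = h := by
    rw [(e A).curry_natural, (e A).curry_uncurry, Category.comp_id]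
  conv_lhs => rw [← h1, (e A).uncurry_curry]

lemma uncurry_inj {A X : C} {f g : X ⟶ Robj e A}
    (h : (e A).uncurry f = (e A).uncurry g) : f = g := by
  rw [← (e A).curry_uncurry f, h, (e A).curry_uncurry]

lemma uncurry_comp {X Y A : C} (g : X ⟶ Y) (h : Y ⟶ Robj e A) :
    (e A).uncurry (g ≫ h) = prod.map g (𝟙 A) ≫ (e A).uncurry h := by
  rw [uncurry_eq e (g ≫ h), uncurry_eq e h, ← Category.assoc, prod.map_map,
    Category.comp_id]

lemma uncurry_Rmap {A B : C} (f : A ⟶ B) :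
    (e A).uncurry (Rmap e f) =
      prod.map (𝟙 (Robj e B)) f ≫ (e B).uncurry (𝟙 (Robj e B)) := by
  rw [Rmap, (e A).uncurry_curry]

lemma Rmap_comp {A B D : C} (f : A ⟶ B) (g : B ⟶ D) :
    Rmap e g ≫ Rmap e f = Rmap e (f ≫ g) := by
  apply uncurry_inj e
  rw [uncurry_comp e (Rmap e g) (Rmap e f), uncurry_Rmap e f, uncurry_Rmap e (f ≫ g),
    ← Category.assoc, prod.map_map, Category.id_comp, Category.comp_id]
  have h1 : prod.map (Rmap e g) f =
      prod.map (𝟙 (Robj e D)) f ≫ prod.map (Rmap e g) (𝟙 B) := by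
    rw [prod.map_map, Category.id_comp, Category.comp_id]
  rw [h1, Category.assoc, ← uncurry_eq e (Rmap e g), uncurry_Rmap e g,
    ← Category.assoc, prod.map_map, Category.id_comp]

/-- Evaluation `f̂ : X ⟶ R` of a point `f : 1 ⟶ R^X`. -/
noncomputable def hatR {X : C} (f : (⊤_ C) ⟶ Robj e X) : X ⟶ R :=
  prod.lift (terminal.from X) (𝟙 X) ≫ (e X).uncurry f

lemma lift_from_comp {W X : C} (t : W ⟶ X) (f : (⊤_ C) ⟶ Robj e X) :
    prod.lift (terminal.from W) t ≫ (e X).uncurry f = t ≫ hatR e f := by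
  rw [hatR, ← Category.assoc]
  congr 1
  apply Limits.prod.hom_ext
  · apply terminal.hom_ext
  · simp

lemma hat_inj {X : C} {f g : (⊤_ C) ⟶ Robj e X} (h : hatR e f = hatR e g) : f = g := by
  have key : ∀ u : (⊤_ C) ⟶ Robj e X, (e X).curry (prod.snd ≫ hatR e u) = u := by
    intro u
    have h2 : (prod.snd : (⊤_ C) ⨯ X ⟶ X) ≫ prod.lift (terminal.from X) (𝟙 X) =
        𝟙 ((⊤_ C) ⨯ X) := by
      apply Limits.prod.hom_ext
      · apply terminal.hom_ext
      · simp [prod.lift_fst, prod.lift_snd, prod.lift_fst_assoc, prod.lift_snd_assoc]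
    rw [hatR, ← Category.assoc, h2, Category.id_comp, (e X).curry_uncurry]
  rw [← key f, h, key g]

lemma hat_curry {X : C} (h : (⊤_ C) ⨯ X ⟶ R) :
    hatR e ((e X).curry h) = prod.lift (terminal.from X) (𝟙 X) ≫ h := by
  rw [hatR, (e X).uncurry_curry]

lemma hat_comp {X Y : C} (m : Y ⟶ X) (f : (⊤_ C) ⟶ Robj e X) :
    hatR e (f ≫ Rmap e m) = m ≫ hatR e f := by
  rw [hatR, uncurry_comp, uncurry_Rmap]
  have h1 : prod.lift (terminal.from Y) (𝟙 Y) ≫ prod.map f (𝟙 Y) ≫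
      prod.map (𝟙 (Robj e X)) m = prod.lift (terminal.from Y ≫ f) m := by
    apply Limits.prod.hom_ext <;> simp
  have h2 : (prod.lift (terminal.from Y ≫ f) m : Y ⟶ Robj e X ⨯ X) =
      m ≫ prod.lift (terminal.from X) (𝟙 X) ≫ prod.map f (𝟙 X) := by
    apply Limits.prod.hom_ext <;> simp
  rw [← Category.assoc, ← Category.assoc, Category.assoc _ _ (prod.map _ m), h1, h2,
    hatR, uncurry_eq e f]
  simp only [Category.assoc]

variable {Bt : Type} (κ : Bt → C) (E : Bt)

lemma muR_nameR {σ : LTy Bt} (a : κ E ⟶ KObj e κ σ) (f : RE e κ E σ) :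
    muR e κ E (nameR e κ E a f) =
      f ≫ Rmap e (prod.lift a (𝟙 (κ E))) := by
  rw [muR, nameR, Category.assoc, Rmap_comp]
  congr 1
  congr 1
  apply Limits.prod.hom_ext
  · simp [prod.lift_fst, prod.lift_snd, prod.lift_fst_assoc, prod.lift_snd_assoc]
  · simp [prod.lift_fst, prod.lift_snd, prod.lift_fst_assoc, prod.lift_snd_assoc]

lemma muR_nameR_bot (a : κ E ⟶ KObj e κ (.bot : LTy Bt)) (f : RE e κ E .bot) :
    muR e κ E (nameR e κ E a f) = muR e κ E f := by
  rw [muR_nameR, muR]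
  congr 2
  apply Limits.prod.hom_ext
  · apply terminal.hom_ext
  · simp [prod.lift_fst, prod.lift_snd, prod.lift_fst_assoc, prod.lift_snd_assoc]

lemma hat_apR {σ τ : LTy Bt} (f : RE e κ E (.arr σ τ)) (g : RE e κ E σ) :
    hatR e (apR e κ E f g) =
      prod.lift (prod.lift (prod.snd ≫ checkR e κ E g) prod.fst) prod.snd ≫
        hatR e f := by
  rw [apR, hat_curry, ← Category.assoc, ← lift_from_comp]
  congr 1
  apply Limits.prod.hom_ext
  · apply terminal.hom_ext
  · apply Limits.prod.hom_ext
    · apply Limits.prod.hom_ext <;> simp [prod.lift_fst, prod.lift_snd, prod.lift_fst_assoc, prod.lift_snd_assoc]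
    · simp [prod.lift_fst, prod.lift_snd, prod.lift_fst_assoc, prod.lift_snd_assoc]

lemma muR_nameR_apR {σ τ : LTy Bt} (a : κ E ⟶ KObj e κ τ)
    (f : RE e κ E (.arr σ τ)) (g : RE e κ E σ) :
    muR e κ E (nameR e κ E a (apR e κ E f g)) =
      muR e κ E (nameR e κ E (σ := .arr σ τ) (prod.lift (checkR e κ E g) a) f) := by
  rw [muR_nameR, muR_nameR]
  apply hat_inj e
  rw [hat_comp, hat_comp, hat_apR, ← Category.assoc]
  congr 1
  show (prod.lift a (𝟙 (κ E)) ≫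
      prod.lift (prod.lift (prod.snd ≫ checkR e κ E g) prod.fst) prod.snd :
      κ E ⟶ (Robj e (KObj e κ σ) ⨯ KObj e κ τ) ⨯ κ E) =
    prod.lift (prod.lift (checkR e κ E g) a) (𝟙 (κ E))
  apply Limits.prod.hom_ext
  · apply Limits.prod.hom_ext <;> simp [prod.lift_fst, prod.lift_snd, prod.lift_fst_assoc, prod.lift_snd_assoc]
  · simp [prod.lift_fst, prod.lift_snd, prod.lift_fst_assoc, prod.lift_snd_assoc]

lemma muR_nameR_prR1 {σ τ : LTy Bt} (a : κ E ⟶ KObj e κ σ)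
    (f : RE e κ E (.prd σ τ)) :
    muR e κ E (nameR e κ E a (prR1 e κ E f)) =
      muR e κ E (nameR e κ E (σ := .prd σ τ) (a ≫ coprod.inl) f) := by
  rw [muR_nameR, muR_nameR, prR1, Category.assoc, Rmap_comp]
  congr 2
  show prod.lift a (𝟙 (κ E)) ≫
      prod.map (coprod.inl : KObj e κ σ ⟶ KObj e κ σ ⨿ KObj e κ τ) (𝟙 (κ E)) =
    (prod.lift (a ≫ coprod.inl) (𝟙 (κ E)) :
      κ E ⟶ (KObj e κ σ ⨿ KObj e κ τ) ⨯ κ E)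
  apply Limits.prod.hom_ext <;> simp

lemma muR_nameR_prR2 {σ τ : LTy Bt} (a : κ E ⟶ KObj e κ τ)
    (f : RE e κ E (.prd σ τ)) :
    muR e κ E (nameR e κ E a (prR2 e κ E f)) =
      muR e κ E (nameR e κ E (σ := .prd σ τ) (a ≫ coprod.inr) f) := by
  rw [muR_nameR, muR_nameR, prR2, Category.assoc, Rmap_comp]
  congr 2
  show prod.lift a (𝟙 (κ E)) ≫
      prod.map (coprod.inr : KObj e κ τ ⟶ KObj e κ σ ⨿ KObj e κ τ) (𝟙 (κ E)) =
    (prod.lift (a ≫ coprod.inr) (𝟙 (κ E)) :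
      κ E ⟶ (KObj e κ σ ⨿ KObj e κ τ) ⨯ κ E)
  apply Limits.prod.hom_ext <;> simp

variable {S : Sgn} {M : Struc S} (pty : S.PPred → LTy Bt)
variable (TVp : ∀ P : S.PPred, HList M.U (S.parity P) → Set (RE e κ E (pty P)))
variable (Pole : Set ((⊤_ C) ⟶ Robj e (κ E)))

open Classical in
theorem tv_eq_orthogonal_fv_gen {ctx : List (FSort S.Base)} (A : Fml S ctx)
    (hA : IsNeg A) : ∀ env : Env M ctx,
    tv e κ E pty TVp Pole A env =
      {f | ∀ a ∈ fv e κ E pty TVp Pole A env, muR e κ E (nameR e κ E a f) ∈ Pole} := by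
  induction hA with
  | natom P ts =>
    intro env
    ext f
    simp only [tv, fv, Set.mem_setOf_eq]
    constructor
    · rintro (h | h) a ⟨hn, rfl⟩
      · exact absurd h hn
      · rw [muR_nameR_bot]; exact h
    · intro h
      by_cases hn : M.npred P (ts.eval env)
      · exact Or.inl hn
      · refine Or.inr ?_
        rw [← muR_nameR_bot e κ E (terminal.from (κ E)) f]
        exact h _ ⟨hn, rfl⟩
  | bot =>
    intro env
    ext f
    simp only [tv, fv, Set.mem_setOf_eq]
    constructor
    · rintro h a rfl
      rw [muR_nameR_bot]; exact h
    · intro h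
      rw [← muR_nameR_bot e κ E (terminal.from (κ E)) f]
      exact h _ rfl
  | @imp ctx A B hB ih =>
    intro env
    ext f
    simp only [tv, fv, Set.mem_setOf_eq]
    constructor
    · rintro h x ⟨g, hg, a, ha, rfl⟩
      have := h g hg
      rw [ih env] at this
      have := this a ha
      rwa [muR_nameR_apR] at this
    · intro h g hg
      rw [ih env]
      intro a ha
      rw [muR_nameR_apR]
      exact h _ ⟨g, hg, a, ha, rfl⟩
  | @conj ctx A B hA hB ihA ihB =>
    intro env
    ext f
    simp only [tv, fv, Set.mem_setOf_eq]
    constructor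
    · rintro ⟨h1, h2⟩ x (⟨a, ha, rfl⟩ | ⟨b, hb, rfl⟩)
      · rw [ihA env] at h1
        have := h1 a ha
        rwa [muR_nameR_prR1] at this
      · rw [ihB env] at h2
        have := h2 b hb
        rwa [muR_nameR_prR2] at this
    · intro h
      constructor
      · rw [ihA env]
        intro a ha
        rw [muR_nameR_prR1]
        exact h _ (Or.inl ⟨a, ha, rfl⟩)
      · rw [ihB env]
        intro b hb
        rw [muR_nameR_prR2]
        exact h _ (Or.inr ⟨b, hb, rfl⟩)
  | @all ctx σ A hA ih =>
    intro env
    ext f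
    simp only [tv, fv, Set.mem_setOf_eq]
    constructor
    · rintro h x ⟨a, hx⟩
      have := h a
      rw [ih (Env.cons a env)] at this
      exact this x hx
    · intro h a
      rw [ih (Env.cons a env)]
      intro x hx
      exact h x ⟨a, hx⟩

end AuxLemmas

/-- Truth values are the orthogonals of falsity values: for every closed negative formula
`N` over `Σ` with parameters in `M`, the truth value `⟦N⟧` equals
`{f : 1 ⟶ [|N|] ⅋ [E] | ∀ a ∈ ⦃N⦄, μκ.[a]f ∈ ⫫}`. -/
theorem tv_eq_orthogonal_fv {C : Type u} [Category.{v} C]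
    [HasFiniteProducts C] [HasFiniteCoproducts C]
    (hdist : ∀ A B D : C, IsIso (distCan A B D))
    {R : C} (e : ∀ A : C, ExpObj R A)
    {Bt : Type} (κ : Bt → C) (E : Bt)
    {S : Sgn} {M : Struc S} (pty : S.PPred → LTy Bt)
    (TVp : ∀ P : S.PPred, HList M.U (S.parity P) → Set (RE e κ E (pty P)))
    (Pole : Set ((⊤_ C) ⟶ Robj e (κ E)))
    (A : Fml S []) (hA : IsNeg A) :
    tv e κ E pty TVp Pole A Env.nil =
      {f | ∀ a ∈ fv e κ E pty TVp Pole A Env.nil, muR e κ E (nameR e κ E a f) ∈ Pole} :=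
  tv_eq_orthogonal_fv_gen e κ E pty TVp Pole A hA Env.nil
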